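/- In a branching framework equipped with a depth measure, suppose given functions M : P → ℕ and M2 : (p : P) → cuts p → ℕ and a strategy σ assigning to each active position p a cut σ(p) ∈ cuts p, such that: (i) for every active p, M2(p, σ(p)) ≤ M2(p, c) for all c ∈ cuts p; (ii) for every active p and every c ∈ cuts p, M2(p, c) = 1 + the sum over q ∈ children p c of M(q); and (iii) for every position p, M(p) equals the size of the proof tree T^σ(p) obtained by choosing the cut σ(q) at every active node with position q (so M(p) = 0 for inactive p). Then for every position p one has M(p) = Cmin(p), for every active p and c ∈ cuts p one has M2(p, c) = 1 + the sum over q ∈ children p c of Cmin(q), and T^σ(p) is a minimal proof tree for p. -/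

import Mathlib

/-- A branching framework: positions, an activity predicate, a finite set of
available cuts at each position (nonempty when the position is active), and a
finite list of child positions for each cut. -/
structure Framework where
  P : Type
  C : Type
  active : P → Prop
  cuts : P → Finset C
  children : P → C → List P
  cuts_nonempty : ∀ p, active p → (cuts p).Nonempty

namespace Framework

/-- A proof tree for a position `p`: a leaf if `p` is not active, otherwise a
choice of cut `c ∈ cuts p` together with a proof tree for each position in
`children p c`. -/
inductive ProofTree (F : Framework) : F.P → Type where
  | leaf (p : F.P) (h : ¬ F.active p) : ProofTree F p
  | node (p : F.P) (h : F.active p) (c : F.C) (hc : c ∈ F.cuts p)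
      (sub : (i : Fin (F.children p c).length) → ProofTree F ((F.children p c).get i)) :
      ProofTree F p

/-- The size of a proof tree: the number of internal (non-leaf) nodes. -/
def ProofTree.size {F : Framework} : {p : F.P} → F.ProofTree p → ℕ
  | _, .leaf _ _ => 0
  | _, .node p _ c _ sub => 1 + ∑ i : Fin (F.children p c).length, (sub i).size

/-- The minimal size of a proof tree for `p`. -/
noncomputable def Cmin {F : Framework} (p : F.P) : ℕ :=
  sInf {n | ∃ T : F.ProofTree p, T.size = n}


open Classical in
/-- The proof tree obtained by following the strategy `σ` at every active
node, starting from `p`. Well-founded recursion on the depth measure `D`. -/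
noncomputable def stratTree (F : Framework) (D : F.P → ℕ)
    (hD : ∀ p c q, F.active p → c ∈ F.cuts p → q ∈ F.children p c → D q < D p)
    (σ : F.P → F.C) (hσ : ∀ p, F.active p → σ p ∈ F.cuts p) :
    (p : F.P) → F.ProofTree p := fun p =>
  if h : F.active p then
    .node p h (σ p) (hσ p h)
      (fun i => stratTree F D hD σ hσ ((F.children p (σ p)).get i))
  else .leaf p h
termination_by p => D p
decreasing_by
  exact hD p (σ p) _ h (hσ p h) (List.get_mem _ i)

end Framework

lemma aux_sum {α : Type*} (l : List α) (f : α → ℕ) :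
    (l.map f).sum = ∑ i : Fin l.length, f (l.get i) := by
  induction l with
  | nil => simp
  | cons a t ih =>
      rw [List.map_cons, List.sum_cons, ih]
      exact (Fin.sum_univ_succ (fun i : Fin (t.length + 1) => f ((a :: t).get i))).symm

/-- Soundness of a pair of perfectly-trained value/policy functions: if
`M : P → ℕ`, `M2 : P → C → ℕ` and a strategy `σ` (choosing a cut `σ p ∈ cuts p`
at every active `p`) satisfy
(i) for every active `p`, `M2 p (σ p) ≤ M2 p c` for all `c ∈ cuts p`;
(ii) for every active `p` and `c ∈ cuts p`,
     `M2 p c = 1 + ∑_{q ∈ children p c} M q`;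
(iii) for every `p`, `M p` is the size of the proof tree `T^σ(p)` obtained by
     following `σ` at every active node;
then `M p = Cmin p` for every `p`, `M2 p c = 1 + ∑_{q ∈ children p c} Cmin q`
for every active `p` and `c ∈ cuts p`, and `T^σ(p)` is a minimal proof tree. -/
theorem perfect_training_gives_minimal_proofs (F : Framework) (D : F.P → ℕ)
    (hD : ∀ p c q, F.active p → c ∈ F.cuts p → q ∈ F.children p c → D q < D p)
    (M : F.P → ℕ) (M2 : F.P → F.C → ℕ)
    (σ : F.P → F.C) (hσ : ∀ p, F.active p → σ p ∈ F.cuts p)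
    (h1 : ∀ p, F.active p → ∀ c ∈ F.cuts p, M2 p (σ p) ≤ M2 p c)
    (h2 : ∀ p, F.active p → ∀ c ∈ F.cuts p,
      M2 p c = 1 + ((F.children p c).map M).sum)
    (h3 : ∀ p, M p = (Framework.stratTree F D hD σ hσ p).size) :
    (∀ p, M p = Framework.Cmin p) ∧
      (∀ p, F.active p → ∀ c ∈ F.cuts p,
        M2 p c = 1 + ((F.children p c).map (fun q => Framework.Cmin q)).sum) ∧
      (∀ p, (Framework.stratTree F D hD σ hσ p).size = Framework.Cmin p) := by
  -- M p ≤ size of any proof tree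
  have key : ∀ p (T : F.ProofTree p), M p ≤ T.size := by
    intro p T
    induction T with
    | leaf p h =>
      rw [h3 p, Framework.stratTree, dif_neg h]
    | node p h c hc sub ih =>
      have hM : M p = M2 p (σ p) := by
        rw [h3 p, Framework.stratTree, dif_pos h]
        simp only [Framework.ProofTree.size]
        rw [h2 p h (σ p) (hσ p h), aux_sum]
        congr 1
        exact Finset.sum_congr rfl fun i _ => (h3 _).symm
      rw [hM]
      calc M2 p (σ p) ≤ M2 p c := h1 p h c hc
        _ = 1 + ((F.children p c).map M).sum := h2 p h c hc
        _ ≤ (Framework.ProofTree.node p h c hc sub).size := by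
            simp only [Framework.ProofTree.size]
            rw [aux_sum]
            exact Nat.add_le_add_left (Finset.sum_le_sum fun i _ => ih i) 1
  have hMC : ∀ p, M p = Framework.Cmin p := by
    intro p
    refine le_antisymm ?_ ?_
    · exact le_csInf ⟨_, Framework.stratTree F D hD σ hσ p, rfl⟩
        (by rintro n ⟨T, rfl⟩; exact key p T)
    · rw [h3 p]
      exact Nat.sInf_le ⟨_, rfl⟩
  refine ⟨hMC, ?_, fun p => by rw [← h3 p, hMC p]⟩
  intro p hp c hc
  rw [h2 p hp c hc]
  congr 1
  exact congrArg List.sum (List.map_congr_left fun q _ => hMC q)
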